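/- Let G be a connected chordal graph and S an inclusion-minimal element of the set of minimal vertex separators of G. Then every connected component of G(V \ S) contains at least one simply separated (boundary) simplicial component of G, i.e., each component contains Simp(C) for some boundary clique C of G. -/

import Mathlib

namespace Chordal

variable {V : Type*} [Fintype V]

/-- A closed walk has a chord: an edge of `G` joining two support vertices that is
not an edge of the walk. -/
def HasChord (G : SimpleGraph V) {u : V} (c : G.Walk u u) : Prop :=
  ∃ v w, v ∈ c.support ∧ w ∈ c.support ∧ G.Adj v w ∧ s(v, w) ∉ c.edges

/-- A graph is chordal if every cycle of length at least 4 has a chord. -/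
def IsChordal (G : SimpleGraph V) : Prop :=
  ∀ ⦃u : V⦄ (c : G.Walk u u), c.IsCycle → 4 ≤ c.length → HasChord G c

/-- A maximal clique of `G`. -/
def IsMaxClique (G : SimpleGraph V) (s : Set V) : Prop :=
  G.IsClique s ∧ ∀ t : Set V, G.IsClique t → s ⊆ t → s = t

/-- A maximal clique of the induced subgraph `G(W)`. -/
def IsMaxCliqueOn (G : SimpleGraph V) (W s : Set V) : Prop :=
  s ⊆ W ∧ G.IsClique s ∧ ∀ t : Set V, t ⊆ W → G.IsClique t → s ⊆ t → s = t

/-- There is a walk from `u` to `w` staying inside `W` and avoiding `S`. -/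
def ReachWithin (G : SimpleGraph V) (W S : Set V) (u w : V) : Prop :=
  ∃ p : G.Walk u w, ∀ x ∈ p.support, x ∈ W ∧ x ∉ S

/-- `S` separates `u` from `w` in the induced subgraph `G(W)`. -/
def SeparatesOn (G : SimpleGraph V) (W S : Set V) (u w : V) : Prop :=
  u ∈ W ∧ w ∈ W ∧ u ∉ S ∧ w ∉ S ∧ u ≠ w ∧ ¬ ReachWithin G W S u w

/-- `S` is a minimal vertex separator of the induced subgraph `G(W)`:
for some pair `u, w` it is an inclusion-minimal set separating `u` from `w`. -/
def IsMinSeparatorOn (G : SimpleGraph V) (W S : Set V) : Prop :=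
  S ⊆ W ∧ ∃ u w, SeparatesOn G W S u w ∧ ∀ S' ⊂ S, ¬ SeparatesOn G W S' u w

/-- `S` is a minimal vertex separator of `G`. -/
def IsMinSeparator (G : SimpleGraph V) (S : Set V) : Prop :=
  IsMinSeparatorOn G Set.univ S

/-- `S` is inclusion-minimal among the minimal vertex separators of `G`. -/
def IsInclMinSeparator (G : SimpleGraph V) (S : Set V) : Prop :=
  IsMinSeparator G S ∧ ∀ S' : Set V, IsMinSeparator G S' → S' ⊆ S → S' = S

/-- `Γ` is a connected component of `G(V \ S)`. -/
def IsCompOutside (G : SimpleGraph V) (S Γ : Set V) : Prop :=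
  ∃ u, u ∉ S ∧ Γ = {w | ReachWithin G Set.univ S u w}

/-- A vertex is simplicial if its neighborhood is a clique. -/
def IsSimplicial (G : SimpleGraph V) (v : V) : Prop :=
  G.IsClique (G.neighborSet v)

/-- The simplicial component of a clique `C`: the simplicial vertices of `G` in `C`. -/
def Simp (G : SimpleGraph V) (C : Set V) : Set V :=
  {v ∈ C | IsSimplicial G v}

/-- The non-simplicial component of a clique `C`. -/
def Sep (G : SimpleGraph V) (C : Set V) : Set V :=
  C \ Simp G C

/-- `C` is a boundary clique (simply separated clique): a maximal clique such that
`Sep C = C ∩ C'` for some other maximal clique `C'`. -/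
def IsBoundaryClique (G : SimpleGraph V) (C : Set V) : Prop :=
  IsMaxClique G C ∧ ∃ C' : Set V, IsMaxClique G C' ∧ C' ≠ C ∧ Sep G C = C ∩ C'

/-- The induced subgraph on `W`, kept on the same vertex type. -/
def restrictS (G : SimpleGraph V) (W : Set V) : SimpleGraph V where
  Adj u v := G.Adj u v ∧ u ∈ W ∧ v ∈ W
  symm := ⟨fun u v ⟨h, hu, hv⟩ => ⟨h.symm, hv, hu⟩⟩
  loopless := ⟨fun u ⟨h, _, _⟩ => G.ne_of_adj h rfl⟩

/-- The vertex subset `A` induces a connected subgraph of `T`. -/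
def ConnOn {α : Type*} (T : SimpleGraph α) (A : Set α) : Prop :=
  A.Nonempty ∧ ∀ u ∈ A, ∀ v ∈ A, ∃ p : T.Walk u v, ∀ x ∈ p.support, x ∈ A

/-- The induced subgraph `G(W)` is complete. -/
def CompleteOn (G : SimpleGraph V) (W : Set V) : Prop :=
  ∀ u ∈ W, ∀ v ∈ W, u ≠ v → G.Adj u v

/-- A clique tree of `G`: a tree on the maximal cliques of `G` satisfying the
junction property. -/
def IsCliqueTree (G : SimpleGraph V) (T : SimpleGraph {s : Set V // IsMaxClique G s}) : Prop :=
  T.IsTree ∧ ∀ (C₁ C₂ : {s : Set V // IsMaxClique G s}) (p : T.Walk C₁ C₂), p.IsPath →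
    ∀ C₃ ∈ p.support, C₁.val ∩ C₂.val ⊆ C₃.val

/-- A leaf (endpoint) of a graph: a vertex with exactly one neighbor. -/
def IsLeaf {α : Type*} (T : SimpleGraph α) (a : α) : Prop :=
  ∃! b, T.Adj a b

/-- The union of the cliques preceding position `k` in a sequence. -/
def prefUnion {K : ℕ} (f : Fin K → Set V) (k : Fin K) : Set V :=
  {v | ∃ j, j < k ∧ v ∈ f j}

/-- A perfect sequence of the maximal cliques of the induced subgraph `G(W)`:
an enumeration of the maximal cliques of `G(W)` with the running intersection property. -/
def IsPerfectSeqOn (G : SimpleGraph V) (W : Set V) {K : ℕ} (f : Fin K → Set V) : Prop :=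
  Function.Injective f ∧ (∀ s : Set V, IsMaxCliqueOn G W s ↔ ∃ k, f k = s) ∧
  ∀ k : Fin K, 0 < (k : ℕ) →
    G.IsClique (prefUnion f k ∩ f k) ∧ ∃ k' : Fin K, k' < k ∧ prefUnion f k ∩ f k ⊆ f k'

/-- A perfect sequence of the maximal cliques of `G`. -/
def IsPerfectSeq (G : SimpleGraph V) {K : ℕ} (f : Fin K → Set V) : Prop :=
  Function.Injective f ∧ (∀ s : Set V, IsMaxClique G s ↔ ∃ k, f k = s) ∧
  ∀ k : Fin K, 0 < (k : ℕ) →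
    G.IsClique (prefUnion f k ∩ f k) ∧ ∃ k' : Fin K, k' < k ∧ prefUnion f k ∩ f k ⊆ f k'

/-- The closed neighborhood of a vertex. -/
def closedNbhd (G : SimpleGraph V) (v : V) : Set V :=
  insert v (G.neighborSet v)


/-!
Write `nbhd G A` for the vertices outside `A` adjacent to `A`. An inclusion-minimal minimal
separator `S` is a minimal `g`–`h` separator for any `g ∈ Γ` and some `h ∉ Γ ∪ S`. Hence, by
chordality, `S` is a clique, `nbhd G Γ = S`, and the component of `h` contains a vertex `z`
adjacent to all of `S`.

It then suffices to show, by induction on `|A|`: if `nbhd G A` is a clique whose vertices have a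
common neighbour `z ∉ A ∪ nbhd G A`, then `A` contains `Simp G C` for a boundary clique `C`.
By Dirac's lemma `A` contains a simplicial vertex `v`, whose closed neighbourhood `C` is a
maximal clique; let `P = Sep G C`. If the component of `z` in `G - P` is adjacent to every vertex
of `P`, it contains a vertex adjacent to all of `P`, which makes `C` a boundary clique. Otherwise
some `p ∈ P` misses it, and a neighbour of `p` outside `C` lies in a component of `G - P` inside
`A \ {v}`: its neighbourhood is contained in the clique `P`, with common neighbour `v`.
-/

open SimpleGraph Set

section Reach

variable {V : Type*}

def nbhd (G : SimpleGraph V) (A : Set V) : Set V :=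
  {x | x ∉ A ∧ ∃ a ∈ A, G.Adj a x}

variable {G : SimpleGraph V} {W S A : Set V} {a b c : V}

theorem mem_union_nbhd_of_adj (ha : a ∈ A) (hab : G.Adj a b) : b ∈ A ∪ nbhd G A :=
  or_iff_not_imp_left.2 fun hb => ⟨hb, a, ha, hab⟩

theorem end_mem_of_walk_avoiding_nbhd {u w : V} (p : G.Walk u w) (hu : u ∈ A)
    (hp : ∀ t ∈ p.support, t ∉ nbhd G A) : w ∈ A := by
  induction p with
  | nil => exact hu
  | @cons u c w h q ih =>
    have hc : c ∈ A := by_contra fun hc => hp c (by simp) ⟨hc, u, hu, h⟩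
    exact ih hc fun t ht => hp t (by simp [ht])

namespace ReachWithin

theorem refl (hW : a ∈ W) (hS : a ∉ S) : ReachWithin G W S a a :=
  ⟨.nil, by simp [hW, hS]⟩

theorem symm (h : ReachWithin G W S a b) : ReachWithin G W S b a :=
  let ⟨p, hp⟩ := h
  ⟨p.reverse, fun t ht => hp t (by simpa using ht)⟩

theorem trans (h₁ : ReachWithin G W S a b) (h₂ : ReachWithin G W S b c) :
    ReachWithin G W S a c :=
  let ⟨p, hp⟩ := h₁
  let ⟨q, hq⟩ := h₂
  ⟨p.append q, fun t ht => ((Walk.mem_support_append_iff p q).1 ht).elim (hp t) (hq t)⟩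

theorem mem_start (h : ReachWithin G W S a b) : a ∈ W ∧ a ∉ S :=
  let ⟨p, hp⟩ := h
  hp a p.start_mem_support

theorem mem_end (h : ReachWithin G W S a b) : b ∈ W ∧ b ∉ S :=
  h.symm.mem_start

theorem step (h : ReachWithin G W S a b) (hbc : G.Adj b c) (hW : c ∈ W) (hS : c ∉ S) :
    ReachWithin G W S a c :=
  h.trans ⟨hbc.toWalk, by simp [h.mem_end, hW, hS]⟩

theorem of_mem_support [DecidableEq V] (p : G.Walk a b) (hp : ∀ t ∈ p.support, t ∈ W ∧ t ∉ S)
    {c : V} (hc : c ∈ p.support) : ReachWithin G W S a c :=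
  ⟨p.takeUntil c hc, fun t ht => hp t (p.support_takeUntil_subset_support hc ht)⟩

theorem exists_walk (hb : ReachWithin G W S a b) (hc : ReachWithin G W S a c) :
    ∃ p : G.Walk b c, ∀ t ∈ p.support, ReachWithin G W S a t := by
  classical
  obtain ⟨p, hp⟩ := hb.symm.trans hc
  exact ⟨p, fun t ht => hb.trans (of_mem_support p hp ht)⟩

theorem mem_of_nbhd_subset (h : ReachWithin G W S a b) (ha : a ∈ A) (hA : nbhd G A ⊆ S) :
    b ∈ A :=
  let ⟨p, hp⟩ := h
  end_mem_of_walk_avoiding_nbhd p ha fun t ht htA => (hp t ht).2 (hA htA)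

end ReachWithin

theorem reachWithin_comm : ReachWithin G W S a b ↔ ReachWithin G W S b a :=
  ⟨.symm, .symm⟩

theorem connOn_reachWithin (ha : a ∈ W) (haS : a ∉ S) :
    ConnOn G {t | ReachWithin G W S a t} :=
  ⟨⟨a, .refl ha haS⟩, fun _ hu _ hv => hu.exists_walk hv⟩

theorem nbhd_reachWithin_univ_subset : nbhd G {t | ReachWithin G univ S a t} ⊆ S :=
  fun x ⟨hx, _, ht, htx⟩ => by_contra fun hxS => hx (ReachWithin.step ht htx (mem_univ x) hxS)

end Reach

section Shortest

variable {V : Type*} {G : SimpleGraph V} {X : Set V} {u v : V}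

theorem exists_shortest_path (h : ∃ p : G.Walk u v, ∀ t ∈ p.support, t ∈ X) :
    ∃ p : G.Walk u v, p.IsPath ∧ (∀ t ∈ p.support, t ∈ X) ∧
      ∀ q : G.Walk u v, (∀ t ∈ q.support, t ∈ X) → p.length ≤ q.length := by
  classical
  have hex : ∃ n, ∃ p : G.Walk u v, (∀ t ∈ p.support, t ∈ X) ∧ p.length = n :=
    let ⟨p, hp⟩ := h
    ⟨_, p, hp, rfl⟩
  obtain ⟨p, hp, hlen⟩ := Nat.find_spec hex
  refine ⟨p.bypass, p.bypass_isPath, fun t ht => hp t (p.support_bypass_subset_support ht),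
    fun q hq => ?_⟩
  exact p.length_bypass_le_length.trans (hlen ▸ Nat.find_min' hex ⟨q, hq, rfl⟩)

theorem isChordless_of_shortest {p : G.Walk u v} (hp : ∀ t ∈ p.support, t ∈ X)
    (hmin : ∀ q : G.Walk u v, (∀ t ∈ q.support, t ∈ X) → p.length ≤ q.length) :
    p.IsChordless := by
  -- an adjacent pair that is not consecutive on `p` would give a shortcut
  have key : ∀ {a b : V} (p₁ : G.Walk u a) (m : G.Walk a b) (p₂ : G.Walk b v),
      p = p₁.append (m.append p₂) → G.Adj a b → s(a, b) ∈ p.edges := by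
    intro a b p₁ m p₂ hpeq hab
    have hshort := hmin (p₁.append (.cons hab p₂)) fun t ht => hp t <| by
      simp only [hpeq, Walk.mem_support_append_iff, Walk.support_cons, List.mem_cons] at ht ⊢
      rcases ht with ht | rfl | ht
      exacts [Or.inl ht, Or.inr (Or.inl m.start_mem_support), Or.inr (Or.inr ht)]
    rw [hpeq] at hshort ⊢
    simp only [Walk.length_append, Walk.length_cons] at hshort
    cases m with
    | nil => exact absurd hab (G.loopless.irrefl a)
    | cons h m' =>
      cases m' with
      | nil => simp [Walk.edges_append]
      | cons _ _ => simp only [Walk.length_cons] at hshort; omega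
  rw [Walk.isChordless_iff_forall_mem_edges]
  intro a b ha hb hab
  obtain ⟨p₁, r, hpr⟩ := Walk.mem_support_iff_exists_append.1 ha
  by_cases hbr : b ∈ r.support
  · obtain ⟨m, p₂, rfl⟩ := Walk.mem_support_iff_exists_append.1 hbr
    exact key p₁ m p₂ hpr hab
  · have hbp : b ∈ p₁.support := by
      rw [hpr, Walk.mem_support_append_iff] at hb
      exact hb.resolve_right hbr
    obtain ⟨p₀, m, rfl⟩ := Walk.mem_support_iff_exists_append.1 hbp
    rw [Sym2.eq_swap]
    exact key p₀ m r (by rw [hpr, Walk.append_assoc]) hab.symm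

end Shortest

section Cycle

variable {V : Type*} {G : SimpleGraph V}

theorem exists_walk_through {A : Set V} {x y d e : V} (hxd : G.Adj x d) (hey : G.Adj e y)
    (h : ∃ q : G.Walk d e, ∀ t ∈ q.support, t ∈ A) :
    ∃ p : G.Walk x y, ∀ t ∈ p.support, t ∈ insert x (insert y A) := by
  obtain ⟨q, hq⟩ := h
  refine ⟨.cons hxd (q.concat hey), fun t ht => ?_⟩
  simp only [Walk.support_cons, Walk.support_concat, List.mem_cons, List.mem_append,
    List.mem_nil_iff, or_false] at ht
  rcases ht with rfl | ht | rfl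
  exacts [mem_insert _ _, mem_insert_of_mem _ (mem_insert_of_mem _ (hq t ht)),
    mem_insert_of_mem _ (mem_insert _ _)]

theorem two_le_length_of_not_adj {x y : V} (hxy : x ≠ y) (hadj : ¬G.Adj x y) (p : G.Walk x y) :
    2 ≤ p.length := by
  match p with
  | .nil => exact absurd rfl hxy
  | .cons h .nil => exact absurd h hadj
  | .cons _ (.cons _ _) => simp

theorem disjoint_support_tail {A B : Set V} (hdisj : Disjoint A B) {x y : V}
    {p q : G.Walk x y} (hp : p.IsPath) (hq : q.IsPath)
    (hpA : ∀ t ∈ p.support, t ∈ insert x (insert y A))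
    (hqB : ∀ t ∈ q.support, t ∈ insert x (insert y B)) :
    p.support.tail.Disjoint q.reverse.support.tail := by
  intro t htp htq
  have htx : t ≠ x := fun h => (List.nodup_cons.1
    (p.cons_tail_support ▸ hp.support_nodup)).1 (h ▸ htp)
  have hty : t ≠ y := fun h => (List.nodup_cons.1
    (q.reverse.cons_tail_support ▸ hq.reverse.support_nodup)).1 (h ▸ htq)
  rcases hpA t (List.mem_of_mem_tail htp) with rfl | rfl | htA
  · exact htx rfl
  · exact hty rfl
  rcases hqB t (by simpa using List.mem_of_mem_tail htq) with rfl | rfl | htB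
  · exact htx rfl
  · exact hty rfl
  exact hdisj.notMem_of_mem_left htA htB

theorem adj_of_walks_through_separated_sides (hch : IsChordal G) {A B : Set V}
    (hAB : ∀ a ∈ A, ∀ b ∈ B, ¬G.Adj a b) (hdisj : Disjoint A B) {x y : V} (hxy : x ≠ y)
    (hA : ∃ p : G.Walk x y, ∀ t ∈ p.support, t ∈ insert x (insert y A))
    (hB : ∃ p : G.Walk x y, ∀ t ∈ p.support, t ∈ insert x (insert y B)) :
    G.Adj x y := by
  by_contra hnadj
  -- shortest connections through `A` and through `B` close up to a cycle of length at least 4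
  -- whose only possible chords would join `A` to `B`
  obtain ⟨p, hp, hpX, hpmin⟩ := exists_shortest_path hA
  obtain ⟨q, hq, hqX, hqmin⟩ := exists_shortest_path hB
  have hp2 := two_le_length_of_not_adj hxy hnadj p
  have hq2 := two_le_length_of_not_adj hxy hnadj q
  have hcyc := hp.isCycle_append hq.reverse (disjoint_support_tail hdisj hp hq hpX hqX)
    (Or.inl hp2)
  obtain ⟨a, b, ha, hb, hab, hnot⟩ := hch _ hcyc <| by
    simp only [Walk.length_append, Walk.length_reverse]
    omega
  simp only [Walk.mem_support_append_iff, Walk.support_reverse, List.mem_reverse] at ha hb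
  simp only [Walk.edges_append, Walk.edges_reverse, List.mem_append, List.mem_reverse,
    not_or] at hnot
  have hpA : ∀ t ∈ p.support, t ∉ q.support → t ∈ A := fun t ht htq => by
    rcases hpX t ht with rfl | rfl | h
    exacts [absurd q.start_mem_support htq, absurd q.end_mem_support htq, h]
  have hqB : ∀ t ∈ q.support, t ∉ p.support → t ∈ B := fun t ht htp => by
    rcases hqX t ht with rfl | rfl | h
    exacts [absurd p.start_mem_support htp, absurd p.end_mem_support htp, h]
  by_cases hpab : a ∈ p.support ∧ b ∈ p.support
  · exact hnot.1 ((isChordless_of_shortest hpX hpmin).mem_edges hpab.1 hpab.2 hab)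
  by_cases hqab : a ∈ q.support ∧ b ∈ q.support
  · exact hnot.2 ((isChordless_of_shortest hqX hqmin).mem_edges hqab.1 hqab.2 hab)
  rcases ha with ha | ha
  · have hb : b ∈ q.support := hb.resolve_left fun hb => hpab ⟨ha, hb⟩
    exact hAB a (hpA a ha fun haq => hqab ⟨haq, hb⟩) b (hqB b hb fun hbp => hpab ⟨ha, hbp⟩) hab
  · have hb : b ∈ p.support := hb.resolve_right fun hb => hqab ⟨ha, hb⟩
    exact hAB b (hpA b hb fun hbq => hqab ⟨ha, hbq⟩) a (hqB a ha fun hap => hpab ⟨hap, hb⟩)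
      hab.symm

end Cycle

section Separator

variable {V : Type*} {G : SimpleGraph V} {W T : Set V} {a b : V}

theorem exists_adj_reachWithin_of_minimal (ha : a ∉ T)
    (hT : Minimal (fun T => ¬ReachWithin G W T a b) T) {x : V} (hx : x ∈ T) :
    ∃ d, G.Adj x d ∧ ReachWithin G W T a d := by
  by_contra hno
  obtain ⟨p, hp⟩ := not_not.1 (hT.not_prop_of_lt (sdiff_singleton_ssubset.2 hx))
  have haW : a ∈ W := (hp a p.start_mem_support).1
  -- only `x` could lead `p` out of the component of `a`
  refine hT.prop (end_mem_of_walk_avoiding_nbhd (A := {t | ReachWithin G W T a t}) p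
    (.refl haW ha) ?_)
  rintro t ht ⟨htR, r, hr, hrt⟩
  by_cases htT : t ∈ T
  · obtain rfl : t = x := by simpa [htT] using (hp t ht).2
    exact hno ⟨r, hrt.symm, hr⟩
  · exact htR (ReachWithin.step hr hrt (hp t ht).1 htT)

theorem isClique_of_minimal (hch : IsChordal G) (ha : a ∉ T) (hb : b ∉ T)
    (hT : Minimal (fun T => ¬ReachWithin G W T a b) T) : G.IsClique T := by
  have hT' : Minimal (fun T => ¬ReachWithin G W T b a) T := by
    simpa only [reachWithin_comm (a := a)] using hT
  have hsep : ∀ s ∈ {t | ReachWithin G W T a t}, ∀ t ∈ {t | ReachWithin G W T b t},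
      ¬G.Adj s t := fun s hs t ht hst =>
    hT.prop ((ReachWithin.step hs hst ht.mem_end.1 ht.mem_end.2).trans ht.symm)
  have hdisj : Disjoint {t | ReachWithin G W T a t} {t | ReachWithin G W T b t} :=
    Set.disjoint_left.2 fun t hta htb => hT.prop (ReachWithin.trans hta (ReachWithin.symm htb))
  intro x hx y hy hxy
  obtain ⟨dx, hxdx, hdx⟩ := exists_adj_reachWithin_of_minimal ha hT hx
  obtain ⟨dy, hydy, hdy⟩ := exists_adj_reachWithin_of_minimal ha hT hy
  obtain ⟨ex, hxex, hex⟩ := exists_adj_reachWithin_of_minimal hb hT' hx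
  obtain ⟨ey, hyey, hey⟩ := exists_adj_reachWithin_of_minimal hb hT' hy
  exact adj_of_walks_through_separated_sides hch hsep hdisj hxy
    (exists_walk_through hxdx hydy.symm (hdx.exists_walk hdy))
    (exists_walk_through hxex hyey.symm (hex.exists_walk hey))

end Separator

section Dirac

variable {V : Type*} {G : SimpleGraph V}

theorem not_reachWithin_diff_pair {W : Set V} {a b : V} (hab : a ≠ b) (hnadj : ¬G.Adj a b) :
    ¬ReachWithin G W (W \ {a, b}) a b := by
  rintro ⟨p, hp⟩
  cases p with
  | nil => exact hab rfl
  | @cons _ c _ h q =>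
    have hc := hp c (by simp)
    have : c = a ∨ c = b := or_iff_not_imp_left.2 (by simpa [hc.1] using hc.2)
    rcases this with rfl | rfl
    exacts [G.loopless.irrefl _ h, hnadj h]

theorem exists_mem_diff_isClique_neighborSet_inter [Finite V] (hch : IsChordal G)
    {W Q : Set V} (hQ : G.IsClique Q) (hWQ : (W \ Q).Nonempty) :
    ∃ v ∈ W \ Q, G.IsClique (G.neighborSet v ∩ W) := by
  by_cases hW : G.IsClique W
  · obtain ⟨v, hv⟩ := hWQ
    exact ⟨v, hv, hW.subset inter_subset_right⟩
  obtain ⟨a, ha, b, hb, hab, hnadj⟩ : ∃ a ∈ W, ∃ b ∈ W, a ≠ b ∧ ¬G.Adj a b := by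
    simpa [IsClique, Set.Pairwise] using hW
  obtain ⟨T, hTsub, hT⟩ := exists_minimal_le_of_wellFoundedLT
    (fun T => ¬ReachWithin G W T a b) (W \ {a, b}) (not_reachWithin_diff_pair hab hnadj)
  have haT : a ∉ T := fun h => (hTsub h).2 (by simp)
  have hbT : b ∉ T := fun h => (hTsub h).2 (by simp)
  have hTc : G.IsClique T := isClique_of_minimal hch haT hbT hT
  -- the required vertex lies on a side of `T` that `Q` does not meet
  have side : ∀ c o, c ∈ W → o ∈ W → c ∉ T → o ∉ T → ¬ReachWithin G W T c o →
      (∀ q ∈ Q, ¬ReachWithin G W T c q) → ∃ v ∈ W \ Q, G.IsClique (G.neighborSet v ∩ W) := by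
    intro c o hc ho hcT hoT hco hcQ
    have hlt : ({t | ReachWithin G W T c t} ∪ T).ncard < W.ncard :=
      ncard_lt_ncard ⟨union_subset (fun t ht => ht.mem_end.1) fun t ht => (hTsub ht).1,
        fun h => (h ho).elim hco hoT⟩
    obtain ⟨v, ⟨hvR | hvT, hvT'⟩, hv⟩ := exists_mem_diff_isClique_neighborSet_inter hch hTc
      (W := {t | ReachWithin G W T c t} ∪ T) ⟨c, Or.inl (.refl hc hcT), hcT⟩
    · refine ⟨v, ⟨hvR.mem_end.1, fun hvQ => hcQ v hvQ hvR⟩, hv.subset ?_⟩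
      rintro u ⟨hvu, huW⟩
      by_cases huT : u ∈ T
      exacts [⟨hvu, Or.inr huT⟩, ⟨hvu, Or.inl (ReachWithin.step hvR hvu huW huT)⟩]
    · exact absurd hvT hvT'
  by_cases hQa : ∃ q ∈ Q, ReachWithin G W T a q
  · obtain ⟨q, hq, haq⟩ := hQa
    refine side b a hb ha hbT haT (fun h => hT.prop h.symm) fun q' hq' hbq' => ?_
    have hqq' : q ≠ q' := fun h => hT.prop (haq.trans (h ▸ hbq'.symm))
    exact hT.prop ((haq.step (hQ hq hq' hqq') hbq'.mem_end.1 hbq'.mem_end.2).trans hbq'.symm)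
  · exact side a b ha hb haT hbT hT.prop fun q hq haq => hQa ⟨q, hq, haq⟩
termination_by W.ncard

end Dirac

section CommonNeighbor

variable {V : Type*} {G : SimpleGraph V}

theorem connOn_diff_singleton {A : Set V} {v : V} (hA : ConnOn G A)
    (hcl : G.IsClique (G.neighborSet v ∩ A)) (hne : (A \ {v}).Nonempty) :
    ConnOn G (A \ {v}) := by
  refine ⟨hne, fun u hu w hw => ?_⟩
  suffices w ∈ {t | ReachWithin G A {v} u t} from this
  obtain ⟨p, hp⟩ := hA.2 u hu.1 w hw.1
  by_cases hv : ∃ r, ReachWithin G A {v} u r ∧ G.Adj r v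
  · obtain ⟨r, hr, hrv⟩ := hv
    -- once `v` is reached, its other neighbours in `A` are reached through `r`
    refine (end_mem_of_walk_avoiding_nbhd (A := insert v {t | ReachWithin G A {v} u t}) p
      (Or.inr (.refl hu.1 hu.2)) ?_).resolve_left hw.2
    rintro t ht ⟨htR, s, hs, hst⟩
    have htv : t ≠ v := fun h => htR (Or.inl h)
    rcases hs with rfl | hs
    · have hrt : r ≠ t := fun h => htR (Or.inr (h ▸ hr))
      exact htR (Or.inr (hr.step (hcl ⟨hrv.symm, hr.mem_end.1⟩ ⟨hst, hp t ht⟩ hrt) (hp t ht) htv))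
    · exact htR (Or.inr (ReachWithin.step hs hst (hp t ht) htv))
  · refine end_mem_of_walk_avoiding_nbhd p (.refl hu.1 hu.2) ?_
    rintro t ht ⟨htR, s, hs, hst⟩
    exact htR (ReachWithin.step hs hst (hp t ht) fun h => hv ⟨s, hs, h ▸ hst⟩)

theorem exists_common_neighbor [Finite V] (hch : IsChordal G) {A Q : Set V} (hA : ConnOn G A)
    (hQ : G.IsClique Q) (hAQ : Disjoint A Q) (hfull : ∀ x ∈ Q, ∃ a ∈ A, G.Adj x a) :
    ∃ z ∈ A, ∀ x ∈ Q, G.Adj z x := by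
  obtain ⟨v, ⟨hvA | hvQ, hvQ'⟩, hv⟩ := exists_mem_diff_isClique_neighborSet_inter hch hQ
    (W := A ∪ Q) (let ⟨a, ha⟩ := hA.1; ⟨a, Or.inl ha, hAQ.notMem_of_mem_left ha⟩)
  swap
  · exact absurd hvQ hvQ'
  by_cases hvQ : ∀ x ∈ Q, G.Adj v x
  · exact ⟨v, hvA, hvQ⟩
  obtain ⟨x₀, hx₀, hvx₀⟩ : ∃ x ∈ Q, ¬G.Adj v x := by simpa using hvQ
  obtain ⟨a₀, ha₀, hx₀a₀⟩ := hfull x₀ hx₀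
  obtain ⟨u, huA, hvu⟩ : ∃ u ∈ A, G.Adj v u := by
    obtain ⟨p, hp⟩ := hA.2 v hvA a₀ ha₀
    cases p with
    | nil => exact absurd hx₀a₀.symm hvx₀
    | @cons _ u _ h q => exact ⟨u, hp u (by simp), h⟩
  have hA' : ConnOn G (A \ {v}) :=
    connOn_diff_singleton hA (hv.subset (inter_subset_inter_right _ subset_union_left))
      ⟨u, huA, (G.ne_of_adj hvu).symm⟩
  have hlt : (A \ {v}).ncard < A.ncard := ncard_lt_ncard (sdiff_singleton_ssubset.2 hvA)
  obtain ⟨z, hz, hzQ⟩ := exists_common_neighbor hch hA' hQ (hAQ.mono_left sdiff_subset)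
    fun x hx => by
      obtain ⟨a, ha, hxa⟩ := hfull x hx
      by_cases hav : a = v
      · subst hav
        exact ⟨u, ⟨huA, (G.ne_of_adj hvu).symm⟩, hv ⟨hxa.symm, Or.inr hx⟩ ⟨hvu, Or.inl huA⟩
          fun h => hAQ.notMem_of_mem_left huA (h ▸ hx)⟩
      · exact ⟨a, ⟨ha, hav⟩, hxa⟩
  exact ⟨z, hz.1, hzQ⟩
termination_by A.ncard

end CommonNeighbor

section Simplicial

variable {V : Type*} {G : SimpleGraph V} {C : Set V} {v : V}

theorem exists_isMaxClique_superset [Finite V] {s : Set V} (hs : G.IsClique s) :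
    ∃ C, IsMaxClique G C ∧ s ⊆ C := by
  obtain ⟨C, hsC, hC⟩ := exists_maximal_ge_of_wellFoundedGT G.IsClique s hs
  exact ⟨C, ⟨hC.prop, fun t ht hCt => le_antisymm hCt (hC.2 ht hCt)⟩, hsC⟩

theorem isClique_closedNbhd (hv : IsSimplicial G v) : G.IsClique (closedNbhd G v) :=
  isClique_insert.2 ⟨hv, fun _ hb _ => hb⟩

theorem subset_closedNbhd (hC : G.IsClique C) (hvC : v ∈ C) : C ⊆ closedNbhd G v :=
  fun _ hu => or_iff_not_imp_left.2 fun huv => hC hvC hu (Ne.symm huv)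

theorem isMaxClique_closedNbhd (hv : IsSimplicial G v) : IsMaxClique G (closedNbhd G v) :=
  ⟨isClique_closedNbhd hv, fun _ ht hsub =>
    (subset_closedNbhd ht (hsub (mem_insert v _))).antisymm' hsub⟩

theorem closedNbhd_eq (hC : IsMaxClique G C) (hv : IsSimplicial G v) (hvC : v ∈ C) :
    closedNbhd G v = C :=
  (hC.2 _ (isClique_closedNbhd hv) (subset_closedNbhd hC.1 hvC)).symm

theorem nbhd_simp_subset_sep (hC : IsMaxClique G C) : nbhd G (Simp G C) ⊆ Sep G C := by
  rintro x ⟨hx, t, ht, htx⟩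
  exact ⟨closedNbhd_eq hC ht.2 ht.1 ▸ mem_insert_of_mem t htx, hx⟩

theorem notMem_of_reachWithin_sep {W : Set V} {a t : V} (hC : IsMaxClique G C) (ha : a ∉ C)
    (h : ReachWithin G W (Sep G C) a t) : t ∉ C := by
  intro htC
  have htS : t ∈ Simp G C := ⟨htC, by_contra fun hts => h.mem_end.2 ⟨htC, fun h' => hts h'.2⟩⟩
  exact ha (h.symm.mem_of_nbhd_subset htS (nbhd_simp_subset_sep hC)).1

theorem isBoundaryClique_closedNbhd [Finite V] (hv : IsSimplicial G v) {y : V}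
    (hy : y ∉ closedNbhd G v) (hyP : ∀ x ∈ Sep G (closedNbhd G v), G.Adj y x) :
    IsBoundaryClique G (closedNbhd G v) := by
  have hC := isMaxClique_closedNbhd hv
  obtain ⟨C', hC', hsub⟩ := exists_isMaxClique_superset (s := insert y (Sep G (closedNbhd G v)))
    (isClique_insert.2 ⟨hC.1.subset sdiff_subset, fun x hx _ => hyP x hx⟩)
  have hyC' : y ∈ C' := hsub (mem_insert y _)
  refine ⟨hC, C', hC', fun h => hy (h ▸ hyC'), subset_antisymm
    (fun x hx => ⟨hx.1, hsub (mem_insert_of_mem y hx)⟩) ?_⟩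
  -- a simplicial vertex lies in just one maximal clique
  rintro x ⟨hxC, hxC'⟩
  refine ⟨hxC, fun hxs => hy ?_⟩
  rw [← closedNbhd_eq hC hxs.2 hxC]
  exact subset_closedNbhd hC'.1 hxC' hyC'

end Simplicial

section Boundary

variable {V : Type*} {G : SimpleGraph V}

theorem nbhd_reachWithin_eq_of_minimal {T : Set V} {a b : V} (ha : a ∉ T)
    (hT : Minimal (fun T => ¬ReachWithin G univ T a b) T) :
    nbhd G {t | ReachWithin G univ T a t} = T :=
  nbhd_reachWithin_univ_subset.antisymm fun _ hx =>
    let ⟨d, hxd, hd⟩ := exists_adj_reachWithin_of_minimal ha hT hx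
    ⟨fun h => h.mem_end.2 hx, d, hd, hxd.symm⟩

theorem exists_minimal_of_isInclMinSeparator [Finite V] {S : Set V} (hS : IsInclMinSeparator G S)
    {g : V} (hg : g ∉ S) : ∃ h, h ∉ S ∧ Minimal (fun T => ¬ReachWithin G univ T g h) S := by
  obtain ⟨⟨-, u, w, ⟨-, -, hu, hw, -, huw⟩, -⟩, hincl⟩ := hS
  obtain ⟨h, hh, hgh⟩ : ∃ h, h ∉ S ∧ ¬ReachWithin G univ S g h := by
    by_cases hgu : ReachWithin G univ S g u
    · exact ⟨w, hw, fun hgw => huw (hgu.symm.trans hgw)⟩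
    · exact ⟨u, hu, hgu⟩
  obtain ⟨T, hTS, hT⟩ :=
    exists_minimal_le_of_wellFoundedLT (fun T => ¬ReachWithin G univ T g h) S hgh
  have hsep : SeparatesOn G univ T g h := ⟨mem_univ g, mem_univ h, fun h' => hg (hTS h'),
    fun h' => hh (hTS h'), fun e => hgh (e ▸ .refl (mem_univ g) hg), hT.prop⟩
  refine ⟨h, hh, hincl T ⟨subset_univ T, g, h, hsep, fun T' hT' hsep' => ?_⟩ hTS ▸ hT⟩
  exact hT.not_prop_of_lt hT' hsep'.2.2.2.2.2

theorem exists_isSimplicial_of_isClique_nbhd [Finite V] (hch : IsChordal G) {A : Set V}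
    (hA : A.Nonempty) (hN : G.IsClique (nbhd G A)) : ∃ v ∈ A, IsSimplicial G v := by
  obtain ⟨v, ⟨hvW, hvN⟩, hv⟩ := exists_mem_diff_isClique_neighborSet_inter hch hN
    (W := A ∪ nbhd G A) (let ⟨a, ha⟩ := hA; ⟨a, Or.inl ha, fun h => h.1 ha⟩)
  have hvA : v ∈ A := hvW.resolve_right hvN
  exact ⟨v, hvA, hv.subset fun _ hu => mem_inter hu (mem_union_nbhd_of_adj hvA hu)⟩

theorem exists_component_subset_of_not_full {A : Set V} {v z p₀ : V} (hv : IsSimplicial G v)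
    (hvW : closedNbhd G v ⊆ A ∪ nbhd G A) (hzP : z ∉ Sep G (closedNbhd G v))
    (hz : ∀ x ∈ nbhd G A, G.Adj z x) (hp₀ : p₀ ∈ Sep G (closedNbhd G v))
    (hp₀z : ∀ t, ReachWithin G univ (Sep G (closedNbhd G v)) z t → ¬G.Adj p₀ t) :
    ∃ d ∉ closedNbhd G v, {t | ReachWithin G univ (Sep G (closedNbhd G v)) d t} ⊆ A := by
  have hp₀A : p₀ ∈ A := (hvW hp₀.1).resolve_right fun h =>
    hp₀z z (.refl (mem_univ z) hzP) (hz p₀ h).symm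
  obtain ⟨d, hp₀d, hdC⟩ : ∃ d, G.Adj p₀ d ∧ d ∉ closedNbhd G v := by
    by_contra! h
    exact hp₀.2 ⟨hp₀.1, (isClique_closedNbhd hv).subset h⟩
  have hd : ReachWithin G univ (Sep G (closedNbhd G v)) d d := .refl (mem_univ d) fun h => hdC h.1
  -- vertices of `nbhd G A` off `P` are adjacent to `z`, so the component of `d` avoids them
  have hdN : ∀ t, ReachWithin G univ (Sep G (closedNbhd G v)) d t → t ∉ nbhd G A :=
    fun t ht htN => hp₀z d ((ReachWithin.step (.refl (mem_univ z) hzP) (hz t htN) (mem_univ t)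
      ht.mem_end.2).trans ht.symm) hp₀d
  have hdA : d ∈ A := by_contra fun h => hdN d hd ⟨h, p₀, hp₀A, hp₀d⟩
  refine ⟨d, hdC, fun t ht => ?_⟩
  obtain ⟨p, hp⟩ := hd.exists_walk ht
  exact end_mem_of_walk_avoiding_nbhd p hdA fun s hs => hdN s (hp s hs)

theorem exists_isBoundaryClique_simp_subset [Finite V] (hch : IsChordal G) {A : Set V}
    (hA : A.Nonempty) (hN : G.IsClique (nbhd G A)) {z : V} (hzA : z ∉ A) (hzN : z ∉ nbhd G A)
    (hz : ∀ x ∈ nbhd G A, G.Adj z x) : ∃ C, IsBoundaryClique G C ∧ Simp G C ⊆ A := by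
  obtain ⟨v, hvA, hv⟩ := exists_isSimplicial_of_isClique_nbhd hch hA hN
  have hC := isMaxClique_closedNbhd hv
  set P := Sep G (closedNbhd G v)
  have hvW : closedNbhd G v ⊆ A ∪ nbhd G A :=
    insert_subset (Or.inl hvA) fun _ hu => mem_union_nbhd_of_adj hvA hu
  -- a vertex `x ∈ nbhd G A` has the nonadjacent neighbours `z` and some `a ∈ A`
  have hNns : ∀ x ∈ nbhd G A, ¬IsSimplicial G x := fun x hx hxs =>
    let ⟨_, a, ha, hax⟩ := hx
    hzN ⟨hzA, a, ha, hxs hax.symm (hz x hx).symm fun h => hzA (h ▸ ha)⟩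
  have hSimp : Simp G (closedNbhd G v) ⊆ A := fun x hx =>
    (hvW hx.1).resolve_right fun hxN => hNns x hxN hx.2
  have hzC : z ∉ closedNbhd G v := fun h => (hvW h).elim hzA hzN
  have hzP : z ∉ P := fun h => hzC h.1
  by_cases hfull : ∀ x ∈ P, ∃ t ∈ {t | ReachWithin G univ P z t}, G.Adj x t
  · obtain ⟨y, hy, hyP⟩ := exists_common_neighbor hch (connOn_reachWithin (mem_univ z) hzP)
      (hC.1.subset sdiff_subset) (Set.disjoint_left.2 fun _ ht => ht.mem_end.2) hfull
    exact ⟨_, isBoundaryClique_closedNbhd hv (notMem_of_reachWithin_sep hC hzC hy) hyP, hSimp⟩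
  -- otherwise a component of `G - P` inside `A` is a smaller instance, with `v` for `z`
  obtain ⟨p₀, hp₀, hp₀z⟩ : ∃ x ∈ P, ∀ t, ReachWithin G univ P z t → ¬G.Adj x t := by
    simpa using hfull
  obtain ⟨d, hdC, hdA⟩ := exists_component_subset_of_not_full hv hvW hzP hz hp₀ hp₀z
  have hd : ReachWithin G univ P d d := .refl (mem_univ d) fun h => hdC h.1
  have hvd : ¬ReachWithin G univ P d v := fun h =>
    notMem_of_reachWithin_sep hC hdC h (mem_insert v _)
  have hlt : {t | ReachWithin G univ P d t}.ncard < A.ncard :=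
    ncard_lt_ncard ⟨hdA, fun h => hvd (h hvA)⟩
  have hNd : nbhd G {t | ReachWithin G univ P d t} ⊆ P := nbhd_reachWithin_univ_subset
  have hvP : v ∉ P := fun h => h.2 ⟨mem_insert v _, hv⟩
  obtain ⟨C, hC, hCd⟩ := exists_isBoundaryClique_simp_subset hch ⟨d, hd⟩
    (hC.1.subset (hNd.trans sdiff_subset)) hvd (fun h => hvP (hNd h))
    fun x hx => (hNd hx).1.resolve_left fun h => hvP (h ▸ hNd hx)
  exact ⟨C, hC, hCd.trans hdA⟩
termination_by A.ncard

end Boundary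

theorem component_contains_boundary_simplicial_component_general {V : Type*} [Fintype V]
    (G : SimpleGraph V) (hch : IsChordal G)
    (S : Set V) (hS : IsInclMinSeparator G S)
    (Γ : Set V) (hΓ : IsCompOutside G S Γ) :
    ∃ C : Set V, IsBoundaryClique G C ∧ Simp G C ⊆ Γ := by
  obtain ⟨g, hg, rfl⟩ := hΓ
  obtain ⟨h, hh, hS⟩ := exists_minimal_of_isInclMinSeparator hS hg
  have hSc : G.IsClique S := isClique_of_minimal hch hg hh hS
  have hN : nbhd G {t | ReachWithin G univ S g t} = S := nbhd_reachWithin_eq_of_minimal hg hS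
  have hS' : Minimal (fun T => ¬ReachWithin G univ T h g) S := by
    simpa only [reachWithin_comm (a := g)] using hS
  obtain ⟨z, hz, hzS⟩ := exists_common_neighbor hch (connOn_reachWithin (mem_univ h) hh) hSc
    (Set.disjoint_left.2 fun _ ht => ht.mem_end.2) fun x hx =>
      let ⟨d, hxd, hd⟩ := exists_adj_reachWithin_of_minimal hh hS' hx
      ⟨d, hd, hxd⟩
  refine exists_isBoundaryClique_simp_subset hch ⟨g, .refl (mem_univ g) hg⟩ ?_
    (fun hgz => hS.prop (hgz.trans hz.symm)) ?_ ?_ <;> rw [hN]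
  exacts [hSc, hz.mem_end.2, hzS]

theorem component_contains_boundary_simplicial_component {V : Type*} [Fintype V]
    (G : SimpleGraph V) (hconn : G.Connected) (hch : IsChordal G)
    (hnc : ¬ CompleteOn G Set.univ)
    (S : Set V) (hS : IsInclMinSeparator G S)
    (Γ : Set V) (hΓ : IsCompOutside G S Γ) :
    ∃ C : Set V, IsBoundaryClique G C ∧ Simp G C ⊆ Γ :=
  component_contains_boundary_simplicial_component_general G hch S hS Γ hΓ

end Chordal
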